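/- Embedding of classical entailment into pure BD: for all formulas φ, χ over {¬, ∧, ∨} with combined variable set {p₁, …, pₙ}, φ classically entails χ if and only if φ ∧ ⋀ᵢ(pᵢ ∨ ¬pᵢ) BD-entails χ ∨ ⋁ᵢ(pᵢ ∧ ¬pᵢ). -/
import Mathlib


inductive FV | T | B | N | F
deriving DecidableEq

open FV

def fneg : FV → FV
  | T => F | F => T | B => B | N => N

def fand : FV → FV → FV
  | T, x => x
  | x, T => x
  | F, _ => F
  | _, F => F
  | B, B => B
  | N, N => N
  | B, N => F
  | N, B => F

def forr : FV → FV → FV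
  | F, x => x
  | x, F => x
  | T, _ => T
  | _, T => T
  | B, B => B
  | N, N => N
  | B, N => T
  | N, B => T

def fcirc : FV → FV
  | T => T | F => T | B => F | N => F

def ftri : FV → FV
  | T => T | B => T | N => F | F => F

inductive Fm
  | var : ℕ → Fm
  | neg : Fm → Fm
  | conj : Fm → Fm → Fm
  | disj : Fm → Fm → Fm
  | circ : Fm → Fm
  | tri : Fm → Fm

def eval (v : ℕ → FV) : Fm → FV
  | .var p => v p
  | .neg φ => fneg (eval v φ)
  | .conj φ χ => fand (eval v φ) (eval v χ)
  | .disj φ χ => forr (eval v φ) (eval v χ)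
  | .circ φ => fcirc (eval v φ)
  | .tri φ => ftri (eval v φ)

/-- designated values -/
def desig (x : FV) : Prop := x = T ∨ x = B

/-- formulas over {¬,∧,∨} -/
def isBD : Fm → Prop
  | .var _ => True
  | .neg φ => isBD φ
  | .conj φ χ => isBD φ ∧ isBD χ
  | .disj φ χ => isBD φ ∧ isBD χ
  | .circ _ => False
  | .tri _ => False

/-- formulas over {¬,∧,∨,∘} -/
def isCircFm : Fm → Prop
  | .var _ => True
  | .neg φ => isCircFm φ
  | .conj φ χ => isCircFm φ ∧ isCircFm χ
  | .disj φ χ => isCircFm φ ∧ isCircFm χ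
  | .circ φ => isCircFm φ
  | .tri _ => False

/-- formulas over {¬,∧,∨,△} -/
def isTriFm : Fm → Prop
  | .var _ => True
  | .neg φ => isTriFm φ
  | .conj φ χ => isTriFm φ ∧ isTriFm χ
  | .disj φ χ => isTriFm φ ∧ isTriFm χ
  | .circ _ => False
  | .tri φ => isTriFm φ

/-- BD entailment between single formulas -/
def ent (φ χ : Fm) : Prop := ∀ v, desig (eval v φ) → desig (eval v χ)

/-- classical (two-valued) evaluation of {¬,∧,∨}-formulas -/
def evalC (b : ℕ → Bool) : Fm → Bool
  | .var p => b p
  | .neg φ => !(evalC b φ)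
  | .conj φ χ => evalC b φ && evalC b χ
  | .disj φ χ => evalC b φ || evalC b χ
  | .circ φ => evalC b φ
  | .tri φ => evalC b φ


/-- variables occurring in a formula -/
def fvars : Fm → Finset ℕ
  | .var p => {p}
  | .neg φ => fvars φ
  | .conj φ χ => fvars φ ∪ fvars χ
  | .disj φ χ => fvars φ ∪ fvars χ
  | .circ φ => fvars φ
  | .tri φ => fvars φ

def bv : Bool → FV := fun b => if b then T else F

lemma desig_fand (x y : FV) : desig (fand x y) ↔ desig x ∧ desig y := by
  cases x <;> cases y <;> simp [desig, fand]

lemma desig_forr (x y : FV) : desig (forr x y) ↔ desig x ∨ desig y := by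
  cases x <;> cases y <;> simp [desig, forr]

lemma classical_of_lem (x : FV) (h1 : desig (forr x (fneg x)))
    (h2 : ¬ desig (fand x (fneg x))) : ∃ c, x = bv c := by
  cases x
  · exact ⟨true, rfl⟩
  · exact absurd (Or.inr rfl) h2
  · exact absurd h1 (by simp [desig, forr, fneg])
  · exact ⟨false, rfl⟩

lemma eval_bv (b : ℕ → Bool) (ψ : Fm) (hψ : isBD ψ) (v : ℕ → FV)
    (hv : ∀ p ∈ fvars ψ, v p = bv (b p)) : eval v ψ = bv (evalC b ψ) := by
  induction ψ with
  | var p => exact hv p (by simp [fvars])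
  | neg ψ ih =>
      have := ih hψ (fun p hp => hv p hp)
      simp only [eval, evalC, this]
      cases evalC b ψ <;> rfl
  | conj ψ₁ ψ₂ ih1 ih2 =>
      have h1 := ih1 hψ.1 (fun p hp => hv p (by simp [fvars, hp]))
      have h2 := ih2 hψ.2 (fun p hp => hv p (by simp [fvars, hp]))
      simp only [eval, evalC, h1, h2]
      cases evalC b ψ₁ <;> cases evalC b ψ₂ <;> rfl
  | disj ψ₁ ψ₂ ih1 ih2 =>
      have h1 := ih1 hψ.1 (fun p hp => hv p (by simp [fvars, hp]))
      have h2 := ih2 hψ.2 (fun p hp => hv p (by simp [fvars, hp]))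
      simp only [eval, evalC, h1, h2]
      cases evalC b ψ₁ <;> cases evalC b ψ₂ <;> rfl
  | circ _ _ => exact absurd hψ (by simp [isBD])
  | tri _ _ => exact absurd hψ (by simp [isBD])

lemma desig_bv (c : Bool) : desig (bv c) ↔ c = true := by
  cases c <;> simp [bv, desig]

lemma foldr_conj (v : ℕ → FV) (ps : List ℕ) (φ : Fm) :
    desig (eval v (ps.foldr (fun p acc => .conj (.disj (.var p) (.neg (.var p))) acc) φ)) ↔
    (∀ p ∈ ps, desig (forr (v p) (fneg (v p)))) ∧ desig (eval v φ) := by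
  induction ps with
  | nil => simp
  | cons q qs ih =>
      simp only [List.foldr_cons, eval, desig_fand, ih, List.mem_cons]
      constructor
      · rintro ⟨hq, hall, hφ⟩
        exact ⟨fun p hp => hp.elim (fun h => h ▸ hq) (hall p), hφ⟩
      · rintro ⟨hall, hφ⟩
        exact ⟨hall q (Or.inl rfl), fun p hp => hall p (Or.inr hp), hφ⟩

lemma foldr_disj (v : ℕ → FV) (ps : List ℕ) (χ : Fm) :
    desig (eval v (ps.foldr (fun p acc => .disj (.conj (.var p) (.neg (.var p))) acc) χ)) ↔
    (∃ p ∈ ps, desig (fand (v p) (fneg (v p)))) ∨ desig (eval v χ) := by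
  induction ps with
  | nil => simp
  | cons q qs ih =>
      simp only [List.foldr_cons, eval, desig_forr, ih, List.mem_cons]
      constructor
      · rintro (hq | ⟨⟨p, hp, hd⟩ | hχ⟩)
        · exact Or.inl ⟨q, Or.inl rfl, hq⟩
        · exact Or.inl ⟨p, Or.inr hp, hd⟩
        · exact Or.inr hχ
      · rintro (⟨p, hp | hp, hd⟩ | hχ)
        · exact Or.inl (hp ▸ hd)
        · exact Or.inr (Or.inl ⟨p, hp, hd⟩)
        · exact Or.inr (Or.inr hχ)

theorem cpl_entailment_to_bd (φ χ : Fm) (hφ : isBD φ) (hχ : isBD χ)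
    (ps : List ℕ) (hps : ∀ p, p ∈ ps ↔ p ∈ fvars φ ∪ fvars χ) :
    (∀ b : ℕ → Bool, evalC b φ = true → evalC b χ = true) ↔
    ent (ps.foldr (fun p acc => .conj (.disj (.var p) (.neg (.var p))) acc) φ)
        (ps.foldr (fun p acc => .disj (.conj (.var p) (.neg (.var p))) acc) χ) := by
  constructor
  · intro hcl v hd
    rw [foldr_conj] at hd
    rw [foldr_disj]
    by_cases hB : ∃ p ∈ ps, desig (fand (v p) (fneg (v p)))
    · exact Or.inl hB
    · push_neg at hB
      have hclassic : ∀ p ∈ ps, ∃ c, v p = bv c := fun p hp =>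
        classical_of_lem _ (hd.1 p hp) (hB p hp)
      classical
      let b : ℕ → Bool := fun p => if h : ∃ c : Bool, v p = bv c then h.choose else true
      have hvb : ∀ p ∈ ps, v p = bv (b p) := by
        intro p hp
        obtain ⟨c, hc⟩ := hclassic p hp
        simp only [b]
        rw [dif_pos ⟨c, hc⟩]
        exact (⟨c, hc⟩ : ∃ c : Bool, v p = bv c).choose_spec
      have hφv : eval v φ = bv (evalC b φ) :=
        eval_bv b φ hφ v (fun p hp => hvb p ((hps p).2 (Finset.mem_union_left _ hp)))
      have hχv : eval v χ = bv (evalC b χ) :=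
        eval_bv b χ hχ v (fun p hp => hvb p ((hps p).2 (Finset.mem_union_right _ hp)))
      right
      rw [hχv, desig_bv]
      apply hcl
      rw [hφv, desig_bv] at hd
      exact hd.2
  · intro hent b hb
    set v : ℕ → FV := fun p => bv (b p) with hv
    have hφv : eval v φ = bv (evalC b φ) := eval_bv b φ hφ v (fun p _ => rfl)
    have hχv : eval v χ = bv (evalC b χ) := eval_bv b χ hχ v (fun p _ => rfl)
    have h1 : desig (eval v (ps.foldr (fun p acc => .conj (.disj (.var p) (.neg (.var p))) acc) φ)) := by
      rw [foldr_conj]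
      refine ⟨fun p _ => ?_, by rw [hφv, desig_bv]; exact hb⟩
      rcases Bool.dichotomy (b p) with h | h <;> simp [hv, bv, h, desig, forr, fneg]
    have h2 := hent v h1
    rw [foldr_disj] at h2
    rcases h2 with ⟨p, _, hd⟩ | h2
    · exfalso; revert hd; rcases Bool.dichotomy (b p) with h | h <;> simp [hv, bv, h, fand, fneg, desig]
    · rw [hχv, desig_bv] at h2; exact h2
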